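/- Let G be a finite group with N = |G|, μ : G → G → ℂ a factor system (|μ(f,g)| = 1 for all f,g; μ(e,f) = μ(f,e) = 1; and μ(h,f)μ(hf,g) = μ(h,fg)μ(f,g) for all f,g,h), and let (D λ)_{λ∈ι} be a family of pairwise-inequivalent irreducible projective unitary representations of G with factor system μ, D λ : G → Matrix (Fin (d λ)) (Fin (d λ)) ℂ, satisfying Σ_{λ∈ι} (d λ)² = N. Let B be a nonempty finite index type, and for each λ let Q λ be a unitary matrix indexed by Fin (d λ) × B. Define W : G → Matrix B B ℂ entrywise by (W f)(p,q) = Σ_{λ∈ι} (d λ / N) · Σ_{j,k ∈ Fin (d λ)} conj((D λ f)(j,k)) · (Q λ)((j,p),(k,q)). Then for every g ∈ G, Σ_{f∈G} conj(μ(f,g)) • ((W f)† · W(fg)) = (if g = e then I else 0). -/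

import Mathlib

/-!
`W` is the inverse group Fourier transform of the block family `Q`:
`W f = ∑ λ, (d λ / N) ∑ j k, conj (D λ f j k) • Q λ⁽ʲᵏ⁾`, where `Q λ⁽ʲᵏ⁾` is the `(j, k)` block
of `Q λ`. Schur orthogonality for irreducible projective representations sharing the factor
system `μ` gives a Plancherel formula: if `W`, `W'` are the transforms of `P`, `P'`, then
`∑ f, (W f)ᴴ * W' f = ∑ λ, (d λ / N) • blockTrace ((P λ)ᴴ * P' λ)`.
The twisted translate `conj (μ f g) • W (f * g)` is the transform of the blocks
`Q λ * ((D λ g)ᴴ ⊗ₖ 1)`, so unitarity of `Q λ` reduces the sum to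
`(∑ λ, (d λ / N) * conj (trace (D λ g))) • 1`. Finally `∑ λ, d λ ^ 2 = N` makes the matrix of
matrix coefficients square, so orthogonality of its rows gives orthogonality of its columns,
and the column relation at `(g, 1)` is `∑ λ, (d λ / N) * conj (trace (D λ g)) = δ g 1`.
-/

open Matrix
open scoped Kronecker

section Schur

variable {G n m : Type*} [Fintype n] [Fintype m]

def IsIrreducibleFamily (D : G → Matrix n n ℂ) : Prop :=
  ∀ S : Submodule ℂ (n → ℂ), (∀ f, ∀ v ∈ S, D f *ᵥ v ∈ S) → S = ⊥ ∨ S = ⊤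

def AreEquivalentFamilies [DecidableEq n] [DecidableEq m] (D : G → Matrix n n ℂ)
    (D' : G → Matrix m m ℂ) : Prop :=
  ∃ (S : Matrix m n ℂ) (T : Matrix n m ℂ), S * T = 1 ∧ T * S = 1 ∧ ∀ f, S * D f = D' f * S

theorem IsIrreducibleFamily.exists_eq_smul_one [DecidableEq n] [Nonempty n] {D : G → Matrix n n ℂ}
    (hD : IsIrreducibleFamily D) {A : Matrix n n ℂ} (hA : ∀ g, D g * A = A * D g) :
    ∃ c : ℂ, A = c • 1 := by
  obtain ⟨c, hc⟩ := Module.End.exists_eigenvalue (toLin' A)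
  have hinv : ∀ f, ∀ v ∈ Module.End.eigenspace (toLin' A) c,
      D f *ᵥ v ∈ Module.End.eigenspace (toLin' A) c := by
    intro f v hv
    rw [Module.End.mem_eigenspace_iff, toLin'_apply] at hv ⊢
    rw [mulVec_mulVec, ← hA, ← mulVec_mulVec, hv, mulVec_smul]
  have htop := (hD _ hinv).resolve_left hc
  refine ⟨c, toLin'.injective (LinearMap.ext fun v => ?_)⟩
  have hv : v ∈ Module.End.eigenspace (toLin' A) c := htop ▸ Submodule.mem_top
  rw [Module.End.mem_eigenspace_iff] at hv
  simp [hv]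

theorem IsIrreducibleFamily.eq_zero_of_intertwines [DecidableEq n] [DecidableEq m]
    {D : G → Matrix n n ℂ} {D' : G → Matrix m m ℂ}
    (hD : IsIrreducibleFamily D) (hD' : IsIrreducibleFamily D')
    (hne : ¬ AreEquivalentFamilies D D') {A : Matrix n m ℂ} (hA : ∀ g, D g * A = A * D' g) :
    A = 0 := by
  by_contra hA0
  have hφ : toLin' A ≠ 0 := fun h => hA0 (toLin'.injective (by rw [h, map_zero]))
  have hrange : LinearMap.range (toLin' A) = ⊤ := by
    refine (hD _ ?_).resolve_left (LinearMap.range_eq_bot.not.mpr hφ)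
    rintro f _ ⟨w, rfl⟩
    exact ⟨D' f *ᵥ w, by simp only [toLin'_apply, mulVec_mulVec, hA]⟩
  have hker : LinearMap.ker (toLin' A) = ⊥ := by
    refine (hD' _ ?_).resolve_right (LinearMap.ker_eq_top.not.mpr hφ)
    intro f v hv
    rw [LinearMap.mem_ker, toLin'_apply] at hv ⊢
    rw [mulVec_mulVec, ← hA, ← mulVec_mulVec, hv, mulVec_zero]
  let e := LinearEquiv.ofBijective (toLin' A)
    ⟨LinearMap.ker_eq_bot.mp hker, LinearMap.range_eq_top.mp hrange⟩
  let S := LinearMap.toMatrix' e.symm.toLinearMap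
  have hSA : S * A = 1 := by
    rw [← LinearMap.toMatrix'_toLin' A, ← LinearMap.toMatrix'_comp]
    exact (congrArg LinearMap.toMatrix' e.symm_comp).trans LinearMap.toMatrix'_id
  have hAS : A * S = 1 := by
    rw [← LinearMap.toMatrix'_toLin' A, ← LinearMap.toMatrix'_comp]
    exact (congrArg LinearMap.toMatrix' e.comp_symm).trans LinearMap.toMatrix'_id
  refine hne ⟨S, A, hSA, hAS, fun f => ?_⟩
  calc S * D f = S * (D f * A) * S := by
        rw [Matrix.mul_assoc, Matrix.mul_assoc, hAS, Matrix.mul_one]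
    _ = S * A * D' f * S := by rw [hA]; simp only [Matrix.mul_assoc]
    _ = D' f * S := by rw [hSA, Matrix.one_mul]

end Schur

section ProjectiveOrthogonality

variable {G n m : Type*} [Group G] [Fintype G] [Fintype n] [Fintype m] [DecidableEq n]
  {μ : G → G → ℂ} {D : G → Matrix n n ℂ} {D' : G → Matrix m m ℂ}

structure IsIrreducibleProjUnitaryRep (μ : G → G → ℂ) (D : G → Matrix n n ℂ) : Prop where
  mem_unitaryGroup : ∀ f, D f ∈ unitaryGroup n ℂ
  map_mul : ∀ f g, D f * D g = μ f g • D (f * g)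
  irreducible : IsIrreducibleFamily D

theorem Matrix.conjTranspose_mul_single_mul_apply [DecidableEq m] (X : Matrix n n ℂ)
    (Y : Matrix m m ℂ) (a b : n) (a' b' : m) :
    (Xᴴ * single a a' (1 : ℂ) * Y) b b' = star (X a b) * Y a' b' := by
  rw [mul_apply, Finset.sum_eq_single a' (fun x _ hx => by
    rw [mul_single_apply_of_ne _ _ _ _ _ hx, zero_mul]) (by simp), mul_single_apply_same,
    mul_one, conjTranspose_apply]

theorem mul_sum_conjTranspose_mul_mul (hμ : ∀ f g, ‖μ f g‖ = 1)
    (hDu : ∀ f, D f ∈ unitaryGroup n ℂ) (hDm : ∀ f g, D f * D g = μ f g • D (f * g))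
    (hDm' : ∀ f g, D' f * D' g = μ f g • D' (f * g)) (E : Matrix n m ℂ) (g : G) :
    D g * ∑ f, (D f)ᴴ * E * D' f = (∑ f, (D f)ᴴ * E * D' f) * D' g := by
  have hD : ∀ f, D g * (D (f * g))ᴴ = μ f g • (D f)ᴴ := by
    intro f
    have hμμ : star (μ f g) * μ f g = 1 := by
      rw [Complex.star_def, Complex.conj_mul', hμ, Complex.ofReal_one, one_pow]
    have hfg : D (f * g) = star (μ f g) • (D f * D g) := by
      rw [hDm, smul_smul, hμμ, one_smul]
    have hg : D g * (D g)ᴴ = 1 := mem_unitaryGroup_iff.mp (hDu g)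
    rw [hfg, conjTranspose_smul, star_star, conjTranspose_mul, mul_smul_comm, ← Matrix.mul_assoc,
      hg, Matrix.one_mul]
  rw [Matrix.mul_sum, Matrix.sum_mul, ← Equiv.sum_comp (Equiv.mulRight g)]
  refine Finset.sum_congr rfl fun f _ => ?_
  simp only [Equiv.coe_mulRight, ← Matrix.mul_assoc, hD, Matrix.mul_assoc _ (D' f), hDm',
    smul_mul, Matrix.mul_smul]

theorem IsIrreducibleProjUnitaryRep.sum_star_mul_eq_zero [DecidableEq m]
    (hμ : ∀ f g, ‖μ f g‖ = 1) (hD : IsIrreducibleProjUnitaryRep μ D)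
    (hD' : IsIrreducibleProjUnitaryRep μ D') (hne : ¬ AreEquivalentFamilies D D')
    (a b : n) (a' b' : m) : ∑ f, star (D f a b) * D' f a' b' = 0 := by
  have h := hD.irreducible.eq_zero_of_intertwines hD'.irreducible hne
    (mul_sum_conjTranspose_mul_mul hμ hD.mem_unitaryGroup hD.map_mul hD'.map_mul (single a a' 1))
  simpa [Matrix.sum_apply, conjTranspose_mul_single_mul_apply] using congrFun (congrFun h b) b'

theorem IsIrreducibleProjUnitaryRep.sum_star_mul_eq (hμ : ∀ f g, ‖μ f g‖ = 1)
    (hD : IsIrreducibleProjUnitaryRep μ D) (a b a' b' : n) :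
    ∑ f, star (D f a b) * D f a' b'
      = if (a, b) = (a', b') then (Fintype.card G / Fintype.card n : ℂ) else 0 := by
  have : Nonempty n := ⟨a⟩
  obtain ⟨c, hc⟩ := hD.irreducible.exists_eq_smul_one
    (mul_sum_conjTranspose_mul_mul hμ hD.mem_unitaryGroup hD.map_mul hD.map_mul (single a a' 1))
  -- `c` is found by comparing traces: conjugation by `D f` preserves the trace of `single a a' 1`
  have hc' : c = if a = a' then (Fintype.card G / Fintype.card n : ℂ) else 0 := by
    have htr := congrArg trace hc
    have hf : ∀ f, trace ((D f)ᴴ * single a a' (1 : ℂ) * D f) = trace (single a a' (1 : ℂ)) := by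
      intro f
      have hu : D f * (D f)ᴴ = 1 := mem_unitaryGroup_iff.mp (hD.mem_unitaryGroup f)
      rw [trace_mul_cycle, hu, Matrix.one_mul]
    simp only [trace_sum, hf, trace_smul, trace_one, Finset.sum_const, Finset.card_univ] at htr
    have hn : (Fintype.card n : ℂ) ≠ 0 := Nat.cast_ne_zero.mpr Fintype.card_ne_zero
    split_ifs with haa <;> simp [haa, trace_single_eq_same, trace_single_eq_of_ne] at htr
    · rw [eq_div_iff hn, htr]
    · exact htr
  have hentry := congrFun (congrFun hc b) b'
  simp only [Matrix.sum_apply, conjTranspose_mul_single_mul_apply] at hentry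
  rw [hentry, hc']
  by_cases hb : b = b' <;> by_cases ha : a = a' <;> simp [ha, hb]

end ProjectiveOrthogonality

section Plancherel

variable {G κ B R : Type*} [Fintype G] [Fintype κ] [DecidableEq κ] [Fintype B] [CommSemiring R]
  [StarRing R]

theorem sum_conjTranspose_sum_smul_mul_sum_smul (a : Matrix G κ R) (c : κ → R)
    (ha : aᴴ * a = diagonal c) (P P' : κ → Matrix B B R) :
    ∑ f, (∑ x, a f x • P x)ᴴ * ∑ y, a f y • P' y = ∑ x, c x • ((P x)ᴴ * P' x) := by
  have hc : ∀ x y, ∑ f, star (a f x) * a f y = diagonal c x y := fun x y => by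
    rw [← ha, mul_apply]; rfl
  simp only [conjTranspose_sum, conjTranspose_smul, Matrix.sum_mul, Matrix.mul_sum,
    smul_mul_smul_comm]
  rw [Finset.sum_comm]
  refine Finset.sum_congr rfl fun x _ => ?_
  rw [Finset.sum_comm]
  simp only [← Finset.sum_smul, hc, diagonal_apply, ite_smul, zero_smul, Finset.sum_ite_eq',
    Finset.mem_univ, if_true]

end Plancherel

section BlockTrace

variable {n B : Type*} [Fintype n]

def blockTrace (P : Matrix (n × B) (n × B) ℂ) : Matrix B B ℂ :=
  ∑ k, P.submatrix (Prod.mk k) (Prod.mk k)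

theorem blockTrace_conjTranspose_mul [Fintype B] (P P' : Matrix (n × B) (n × B) ℂ) :
    blockTrace (Pᴴ * P') = ∑ j, ∑ k,
      (P.submatrix (Prod.mk j) (Prod.mk k))ᴴ * P'.submatrix (Prod.mk j) (Prod.mk k) := by
  ext p q
  simp only [blockTrace, Matrix.sum_apply, submatrix_apply, mul_apply, conjTranspose_apply,
    Fintype.sum_prod_type]
  rw [Finset.sum_comm]

theorem blockTrace_kronecker (A : Matrix n n ℂ) (M : Matrix B B ℂ) :
    blockTrace (A ⊗ₖ M) = trace A • M := by
  ext p q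
  simp [blockTrace, Matrix.sum_apply, trace, Finset.sum_mul]

end BlockTrace

section InverseFourier

variable {G n B : Type*} [Fintype n]

def invFourierBlock (D : G → Matrix n n ℂ) (P : Matrix (n × B) (n × B) ℂ) (f : G) :
    Matrix B B ℂ :=
  ∑ j, ∑ k, star (D f j k) • P.submatrix (Prod.mk j) (Prod.mk k)

theorem star_smul_invFourierBlock_mul [Mul G] [Fintype B] [DecidableEq B] {μ : G → G → ℂ}
    {D : G → Matrix n n ℂ} (hDm : ∀ f g, D f * D g = μ f g • D (f * g))
    (P : Matrix (n × B) (n × B) ℂ) (f g : G) :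
    star (μ f g) • invFourierBlock D P (f * g) = invFourierBlock D (P * ((D g)ᴴ ⊗ₖ 1)) f := by
  have hstar : ∀ j k,
      star (μ f g) * star (D (f * g) j k) = ∑ m, star (D f j m) * star (D g m k) := by
    intro j k
    rw [← star_mul', ← smul_eq_mul, ← Matrix.smul_apply, ← hDm, mul_apply, star_sum]
    simp only [star_mul']
  ext p q
  simp only [invFourierBlock, Matrix.smul_apply, Matrix.sum_apply, submatrix_apply, smul_eq_mul,
    mul_apply, kronecker_apply, conjTranspose_apply, one_apply, Fintype.sum_prod_type, mul_ite,
    mul_one, mul_zero, Finset.sum_ite_eq', Finset.mem_univ, if_true, Finset.mul_sum]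
  refine Finset.sum_congr rfl fun j _ => ?_
  simp only [← mul_assoc, hstar, Finset.sum_mul]
  rw [Finset.sum_comm]
  exact Finset.sum_congr rfl fun _ _ => Finset.sum_congr rfl fun _ _ => by ring

end InverseFourier

section InverseFourierFamily

variable {G B ι : Type*} [Group G] [Fintype G] {n : ι → Type*} [∀ l, Fintype (n l)]
  {μ : G → G → ℂ} {D : (l : ι) → G → Matrix (n l) (n l) ℂ}

noncomputable def invFourier [Fintype ι] (D : (l : ι) → G → Matrix (n l) (n l) ℂ)
    (P : (l : ι) → Matrix (n l × B) (n l × B) ℂ) (f : G) : Matrix B B ℂ :=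
  ∑ l, (Fintype.card (n l) / Fintype.card G : ℂ) • invFourierBlock (D l) (P l) f

def coeffMatrix (D : (l : ι) → G → Matrix (n l) (n l) ℂ) : Matrix (Σ l, n l × n l) G ℂ :=
  of fun x f => D x.1 f x.2.1 x.2.2

theorem star_smul_invFourier_mul [Fintype ι] [Fintype B] [DecidableEq B]
    (hDm : ∀ l f g, D l f * D l g = μ f g • D l (f * g))
    (P : (l : ι) → Matrix (n l × B) (n l × B) ℂ) (f g : G) :
    star (μ f g) • invFourier D P (f * g)
      = invFourier D (fun l => P l * ((D l g)ᴴ ⊗ₖ 1)) f := by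
  simp only [invFourier, Finset.smul_sum, smul_comm (star (μ f g)),
    star_smul_invFourierBlock_mul (hDm _)]

variable [∀ l, DecidableEq (n l)]

theorem coeffMatrix_mul_conjTranspose [DecidableEq ι] (hμ : ∀ f g, ‖μ f g‖ = 1)
    (hD : ∀ l, IsIrreducibleProjUnitaryRep μ (D l))
    (hineq : ∀ l l', l ≠ l' → ¬ AreEquivalentFamilies (D l) (D l')) :
    coeffMatrix D * (coeffMatrix D)ᴴ
      = diagonal fun x => (Fintype.card G / Fintype.card (n x.1) : ℂ) := by
  ext ⟨l, a, b⟩ ⟨l', a', b'⟩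
  simp only [mul_apply, conjTranspose_apply, coeffMatrix, of_apply, diagonal_apply]
  simp_rw [mul_comm (D _ _ _ _)]
  by_cases hl : l = l'
  · subst hl
    rw [(hD l).sum_star_mul_eq hμ]
    simp [eq_comm]
  · rw [(hD l').sum_star_mul_eq_zero hμ (hD l) (hineq l' l (Ne.symm hl))]
    simp [hl]

theorem coeffMatrix_mul_conjTranspose_mul_diagonal [Fintype ι] [DecidableEq ι]
    (hμ : ∀ f g, ‖μ f g‖ = 1)
    (hD : ∀ l, IsIrreducibleProjUnitaryRep μ (D l))
    (hineq : ∀ l l', l ≠ l' → ¬ AreEquivalentFamilies (D l) (D l')) :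
    coeffMatrix D * ((coeffMatrix D)ᴴ
      * diagonal fun x : Σ l, n l × n l => (Fintype.card (n x.1) / Fintype.card G : ℂ)) = 1 := by
  rw [← Matrix.mul_assoc, coeffMatrix_mul_conjTranspose hμ hD hineq, diagonal_mul_diagonal,
    ← diagonal_one]
  congr 1
  funext x
  have : Nonempty (n x.1) := ⟨x.2.1⟩
  have : (Fintype.card (n x.1) : ℂ) ≠ 0 := Nat.cast_ne_zero.mpr Fintype.card_ne_zero
  have : (Fintype.card G : ℂ) ≠ 0 := Nat.cast_ne_zero.mpr Fintype.card_ne_zero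
  field_simp

theorem sum_card_div_mul_star_trace [Fintype ι] [DecidableEq ι] [DecidableEq G]
    (hμ : ∀ f g, ‖μ f g‖ = 1)
    (hD : ∀ l, IsIrreducibleProjUnitaryRep μ (D l))
    (hineq : ∀ l l', l ≠ l' → ¬ AreEquivalentFamilies (D l) (D l')) (hDe : ∀ l, D l 1 = 1)
    (hcomplete : ∑ l, Fintype.card (n l) ^ 2 = Fintype.card G) (g : G) :
    ∑ l, (Fintype.card (n l) / Fintype.card G : ℂ) * star (trace (D l g))
      = if g = 1 then 1 else 0 := by
  set V := coeffMatrix D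
  set w : (Σ l, n l × n l) → ℂ := fun x => Fintype.card (n x.1) / Fintype.card G
  have hright : V * (Vᴴ * diagonal w) = 1 := coeffMatrix_mul_conjTranspose_mul_diagonal hμ hD hineq
  have hcard : Fintype.card (Σ l, n l × n l) = Fintype.card G := by
    simpa [Fintype.card_sigma, sq] using hcomplete
  -- `V` is square, so its right inverse is also a left inverse; the claim is an entry of the latter
  have hleft := (mul_eq_one_comm_of_card_eq (R := ℂ) (eq := hcard)).mp hright
  have hentry := congrFun (congrFun hleft g) 1
  rw [← one_apply, ← hentry, mul_apply, Fintype.sum_sigma]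
  refine Finset.sum_congr rfl fun l _ => ?_
  simp only [mul_diagonal, conjTranspose_apply, V, w, coeffMatrix, of_apply, hDe, one_apply,
    Fintype.sum_prod_type, mul_ite, mul_one, mul_zero, Finset.sum_ite_eq, Finset.mem_univ, if_true,
    trace, diag, star_sum, Finset.mul_sum]
  exact Finset.sum_congr rfl fun _ _ => mul_comm _ _

theorem sum_conjTranspose_invFourier_mul [Fintype ι] [DecidableEq ι] [Fintype B]
    (hμ : ∀ f g, ‖μ f g‖ = 1)
    (hD : ∀ l, IsIrreducibleProjUnitaryRep μ (D l))
    (hineq : ∀ l l', l ≠ l' → ¬ AreEquivalentFamilies (D l) (D l'))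
    (P P' : (l : ι) → Matrix (n l × B) (n l × B) ℂ) :
    ∑ f, (invFourier D P f)ᴴ * invFourier D P' f
      = ∑ l, (Fintype.card (n l) / Fintype.card G : ℂ) • blockTrace ((P l)ᴴ * P' l) := by
  set w : (Σ l, n l × n l) → ℂ := fun x => Fintype.card (n x.1) / Fintype.card G
  set a := (coeffMatrix D)ᴴ * diagonal w
  have ha : aᴴ * a = diagonal w := by
    have hw : star w = w := funext fun x => by simp [w]
    rw [conjTranspose_mul, conjTranspose_conjTranspose, diagonal_conjTranspose, hw,
      Matrix.mul_assoc, coeffMatrix_mul_conjTranspose_mul_diagonal hμ hD hineq, Matrix.mul_one]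
  have hsigma : ∀ (P : (l : ι) → Matrix (n l × B) (n l × B) ℂ) f, invFourier D P f
      = ∑ x, a f x • (P x.1).submatrix (Prod.mk x.2.1) (Prod.mk x.2.2) := by
    intro P f
    simp only [invFourier, invFourierBlock, a, mul_diagonal, conjTranspose_apply, coeffMatrix,
      of_apply, Fintype.sum_sigma, Fintype.sum_prod_type, Finset.smul_sum, smul_smul, w]
    exact Finset.sum_congr rfl fun _ _ => Finset.sum_congr rfl fun _ _ =>
      Finset.sum_congr rfl fun _ _ => by rw [mul_comm]
  simp only [hsigma]
  rw [sum_conjTranspose_sum_smul_mul_sum_smul a w ha]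
  simp only [Fintype.sum_sigma, Fintype.sum_prod_type, blockTrace_conjTranspose_mul,
    Finset.smul_sum, w]

end InverseFourierFamily

theorem stmt_13_general {G : Type*} [Group G] [Fintype G] [DecidableEq G]
    (μ : G → G → ℂ)
    (hμabs : ∀ f g : G, ‖μ f g‖ = 1)
    {ι : Type*} [Fintype ι] [DecidableEq ι]
    (d : ι → ℕ)
    (D : (lam : ι) → G → Matrix (Fin (d lam)) (Fin (d lam)) ℂ)
    (hDu : ∀ (lam : ι) (f : G), D lam f ∈ Matrix.unitaryGroup (Fin (d lam)) ℂ)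
    (hDe : ∀ lam : ι, D lam 1 = 1)
    (hDm : ∀ (lam : ι) (f g : G), D lam f * D lam g = μ f g • D lam (f * g))
    (hirr : ∀ (lam : ι) (S : Submodule ℂ (Fin (d lam) → ℂ)),
      (∀ (f : G), ∀ v ∈ S, (D lam f).mulVec v ∈ S) → S = ⊥ ∨ S = ⊤)
    (hineq : ∀ lam lam' : ι, lam ≠ lam' →
      ¬ ∃ (S : Matrix (Fin (d lam')) (Fin (d lam)) ℂ)
          (T : Matrix (Fin (d lam)) (Fin (d lam')) ℂ),
        S * T = 1 ∧ T * S = 1 ∧ ∀ f : G, S * D lam f = D lam' f * S)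
    (hcomplete : ∑ lam : ι, (d lam) ^ 2 = Fintype.card G)
    {B : Type*} [Fintype B] [DecidableEq B]
    (Q : (lam : ι) → Matrix (Fin (d lam) × B) (Fin (d lam) × B) ℂ)
    (hQ : ∀ lam : ι, Q lam ∈ Matrix.unitaryGroup (Fin (d lam) × B) ℂ)
    (W : G → Matrix B B ℂ)
    (hW : ∀ (f : G) (p q : B),
      W f p q = ∑ lam : ι, ((d lam : ℂ) / (Fintype.card G : ℂ))
        * ∑ j : Fin (d lam), ∑ k : Fin (d lam),
            star (D lam f j k) * Q lam (j, p) (k, q)) :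
    ∀ g : G, ∑ f : G, star (μ f g) • ((W f)ᴴ * W (f * g))
      = if g = 1 then (1 : Matrix B B ℂ) else 0 := by
  intro g
  have hrep : ∀ l, IsIrreducibleProjUnitaryRep μ (D l) := fun l => ⟨hDu l, hDm l, hirr l⟩
  have hWQ : W = invFourier D Q := by
    funext f
    ext p q
    simp [hW, invFourier, invFourierBlock, Matrix.sum_apply]
  calc ∑ f, star (μ f g) • ((W f)ᴴ * W (f * g))
      = ∑ f, (invFourier D Q f)ᴴ * invFourier D (fun l => Q l * ((D l g)ᴴ ⊗ₖ 1)) f := by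
        simp only [hWQ, ← Matrix.mul_smul, star_smul_invFourier_mul hDm]
    _ = ∑ l, ((d l / Fintype.card G : ℂ) * star (trace (D l g))) • (1 : Matrix B B ℂ) := by
        rw [sum_conjTranspose_invFourier_mul hμabs hrep hineq]
        refine Finset.sum_congr rfl fun l _ => ?_
        have hQl : (Q l)ᴴ * Q l = 1 := mem_unitaryGroup_iff'.mp (hQ l)
        rw [← Matrix.mul_assoc, hQl, Matrix.one_mul, blockTrace_kronecker, trace_conjTranspose,
          smul_smul, Fintype.card_fin]
    _ = if g = 1 then 1 else 0 := by
        have := sum_card_div_mul_star_trace hμabs hrep hineq hDe (by simpa using hcomplete) g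
        simp only [Fintype.card_fin] at this
        rw [← Finset.sum_smul, this]
        split_ifs <;> simp

theorem stmt_13 {G : Type*} [Group G] [Fintype G] [DecidableEq G]
    (μ : G → G → ℂ)
    (hμabs : ∀ f g : G, ‖μ f g‖ = 1)
    (hμel : ∀ f : G, μ 1 f = 1) (hμer : ∀ f : G, μ f 1 = 1)
    (hμc : ∀ f g h : G, μ h f * μ (h * f) g = μ h (f * g) * μ f g)
    {ι : Type*} [Fintype ι] [DecidableEq ι]
    (d : ι → ℕ) (hd : ∀ lam : ι, 1 ≤ d lam)
    (D : (lam : ι) → G → Matrix (Fin (d lam)) (Fin (d lam)) ℂ)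
    (hDu : ∀ (lam : ι) (f : G), D lam f ∈ Matrix.unitaryGroup (Fin (d lam)) ℂ)
    (hDe : ∀ lam : ι, D lam 1 = 1)
    (hDm : ∀ (lam : ι) (f g : G), D lam f * D lam g = μ f g • D lam (f * g))
    (hirr : ∀ (lam : ι) (S : Submodule ℂ (Fin (d lam) → ℂ)),
      (∀ (f : G), ∀ v ∈ S, (D lam f).mulVec v ∈ S) → S = ⊥ ∨ S = ⊤)
    (hineq : ∀ lam lam' : ι, lam ≠ lam' →
      ¬ ∃ (S : Matrix (Fin (d lam')) (Fin (d lam)) ℂ)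
          (T : Matrix (Fin (d lam)) (Fin (d lam')) ℂ),
        S * T = 1 ∧ T * S = 1 ∧ ∀ f : G, S * D lam f = D lam' f * S)
    (hcomplete : ∑ lam : ι, (d lam) ^ 2 = Fintype.card G)
    {B : Type*} [Fintype B] [DecidableEq B] [Nonempty B]
    (Q : (lam : ι) → Matrix (Fin (d lam) × B) (Fin (d lam) × B) ℂ)
    (hQ : ∀ lam : ι, Q lam ∈ Matrix.unitaryGroup (Fin (d lam) × B) ℂ)
    (W : G → Matrix B B ℂ)
    (hW : ∀ (f : G) (p q : B),
      W f p q = ∑ lam : ι, ((d lam : ℂ) / (Fintype.card G : ℂ))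
        * ∑ j : Fin (d lam), ∑ k : Fin (d lam),
            star (D lam f j k) * Q lam (j, p) (k, q)) :
    ∀ g : G, ∑ f : G, star (μ f g) • ((W f)ᴴ * W (f * g))
      = if g = 1 then (1 : Matrix B B ℂ) else 0 :=
  stmt_13_general μ hμabs d D hDu hDe hDm hirr hineq hcomplete Q hQ W hW
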